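/- If all initial loads are zero (s_j^0 = 0 for all j), then the price of anarchy of the static load balancing game is at most 3: for any pure Nash equilibrium a' and any action profile a*, SC(a') ≤ 3 · SC(a*). -/

import Mathlib

open Finset

/-- Player `i`'s cost in the static load balancing game with zero initial loads. -/
noncomputable def staticCost0 {n m : ℕ} (lam : Fin n → ℝ) (μ : Fin m → ℝ)
    (a : Fin n → Fin m → ℝ) (i : Fin n) : ℝ :=
  ∑ j, lam i * a i j *
    (lam i * a i j / (2 * μ j) + (∑ k ∈ univ.erase i, lam k * a k j) / μ j)

private lemma aux_nonneg (G K : ℝ) (hK : 0 ≤ K)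
    (h : ∀ θ : ℝ, 0 < θ → θ ≤ 1 → 0 ≤ θ * G + θ ^ 2 * K) : 0 ≤ G := by
  refine le_of_forall_pos_le_add fun ε hε => ?_
  set θ := min 1 (ε / (K + 1)) with hθdef
  have hK1 : (0:ℝ) < K + 1 := by linarith
  have hθpos : 0 < θ := lt_min one_pos (div_pos hε hK1)
  have hθ1 : θ ≤ 1 := min_le_left _ _
  have h1 := h θ hθpos hθ1
  have h2 : 0 ≤ G + θ * K := by nlinarith
  have h3 : θ * K ≤ ε := by
    have hle : θ ≤ ε / (K + 1) := min_le_right _ _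
    have : θ * K ≤ (ε / (K + 1)) * K := by
      apply mul_le_mul_of_nonneg_right hle hK
    calc θ * K ≤ (ε / (K + 1)) * K := this
      _ ≤ ε := by
          rw [div_mul_eq_mul_div, div_le_iff₀ hK1]
          nlinarith
  linarith

/-- If all initial loads are zero, the price of anarchy of the static load balancing game
is at most `3`: for any pure NE `a'` and any profile `a*`, `SC(a') ≤ 3 SC(a*)`. -/
theorem price_of_anarchy_zero_loads {n m : ℕ} (lam : Fin n → ℝ) (μ : Fin m → ℝ)
    (hμ : ∀ j, 0 < μ j) (hlam : ∀ i, 0 < lam i)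
    (a' astar : Fin n → Fin m → ℝ)
    (ha' : ∀ i j, 0 ≤ a' i j) (ha'1 : ∀ i, ∑ j, a' i j = 1)
    (hastar : ∀ i j, 0 ≤ astar i j) (hastar1 : ∀ i, ∑ j, astar i j = 1)
    (hNE : ∀ i : Fin n, ∀ b : Fin m → ℝ, (∀ j, 0 ≤ b j) → (∑ j, b j = 1) →
      staticCost0 lam μ a' i ≤ staticCost0 lam μ (Function.update a' i b) i) :
    ∑ i, staticCost0 lam μ a' i ≤ 3 * ∑ i, staticCost0 lam μ astar i := by
  have hμ' : ∀ j, (μ j) ≠ 0 := fun j => (hμ j).ne'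
  set x : Fin m → ℝ := fun j => ∑ k, lam k * a' k j with hxdef
  set y : Fin m → ℝ := fun j => ∑ k, lam k * astar k j with hydef
  have hxj : ∀ j, ∑ k, lam k * a' k j = x j := fun j => rfl
  have hyj : ∀ j, ∑ k, lam k * astar k j = y j := fun j => rfl
  have hx_eq : ∀ i j, lam i * a' i j + (∑ k ∈ univ.erase i, lam k * a' k j) = x j :=
    fun i j => Finset.add_sum_erase univ (fun k => lam k * a' k j) (mem_univ i)
  have hy_eq : ∀ i j, lam i * astar i j + (∑ k ∈ univ.erase i, lam k * astar k j) = y j :=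
    fun i j => Finset.add_sum_erase univ (fun k => lam k * astar k j) (mem_univ i)
  -- Step 1: variational inequality at the NE
  have hG : ∀ i, 0 ≤ ∑ j, (lam i * astar i j - lam i * a' i j) * x j / μ j := by
    intro i
    refine aux_nonneg _ (∑ j, (lam i * astar i j - lam i * a' i j) ^ 2 / (2 * μ j))
      (Finset.sum_nonneg fun j _ => div_nonneg (sq_nonneg _)
        (by have := hμ j; linarith)) ?_
    intro θ hθ hθ1
    set b : Fin m → ℝ := fun j => (1 - θ) * a' i j + θ * astar i j with hbdef
    have hb0 : ∀ j, 0 ≤ b j := fun j =>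
      add_nonneg (mul_nonneg (by linarith) (ha' i j)) (mul_nonneg hθ.le (hastar i j))
    have hb1 : ∑ j, b j = 1 := by
      simp only [hbdef]
      rw [Finset.sum_add_distrib, ← Finset.mul_sum, ← Finset.mul_sum, ha'1 i, hastar1 i]
      ring
    have hne := hNE i b hb0 hb1
    have hupd : staticCost0 lam μ (Function.update a' i b) i
        = ∑ j, lam i * b j * (lam i * b j / (2 * μ j)
            + (∑ k ∈ univ.erase i, lam k * a' k j) / μ j) := by
      unfold staticCost0
      refine Finset.sum_congr rfl fun j _ => ?_
      rw [Function.update_self]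
      have he : (∑ k ∈ univ.erase i, lam k * Function.update a' i b k j)
           = ∑ k ∈ univ.erase i, lam k * a' k j :=
        Finset.sum_congr rfl fun k hk => by
          rw [Function.update_of_ne (Finset.ne_of_mem_erase hk)]
      rw [he]
    have hkey : staticCost0 lam μ (Function.update a' i b) i - staticCost0 lam μ a' i
        = θ * (∑ j, (lam i * astar i j - lam i * a' i j) * x j / μ j)
          + θ ^ 2 * (∑ j, (lam i * astar i j - lam i * a' i j) ^ 2 / (2 * μ j)) := by
      rw [hupd]
      unfold staticCost0
      rw [← Finset.sum_sub_distrib, Finset.mul_sum, Finset.mul_sum, ← Finset.sum_add_distrib]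
      refine Finset.sum_congr rfl fun j _ => ?_
      rw [← hx_eq i j]
      simp only [hbdef]
      have h1 := hμ' j
      field_simp
      ring
    linarith
  -- Step 2: total load comparison
  have hGsum : 0 ≤ ∑ j, (y j - x j) * x j / μ j := by
    have h : (0:ℝ) ≤ ∑ i, ∑ j, (lam i * astar i j - lam i * a' i j) * x j / μ j :=
      Finset.sum_nonneg fun i _ => hG i
    rw [Finset.sum_comm] at h
    calc (0:ℝ) ≤ ∑ j, ∑ i, (lam i * astar i j - lam i * a' i j) * x j / μ j := h
      _ = ∑ j, (y j - x j) * x j / μ j := by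
          refine Finset.sum_congr rfl fun j _ => ?_
          rw [← Finset.sum_div, ← Finset.sum_mul, Finset.sum_sub_distrib, hxj j, hyj j]
  have hxy : ∀ j, x j * y j / μ j ≤ x j ^ 2 / (2 * μ j) + y j ^ 2 / (2 * μ j) := by
    intro j
    have hd : x j ^ 2 / (2 * μ j) + y j ^ 2 / (2 * μ j) - x j * y j / μ j
        = (x j - y j) ^ 2 / (2 * μ j) := by
      have h1 := hμ' j
      field_simp
      ring
    have h0 : 0 ≤ (x j - y j) ^ 2 / (2 * μ j) :=
      div_nonneg (sq_nonneg _) (by have := hμ j; linarith)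
    linarith
  have hxx : ∑ j, x j ^ 2 / μ j ≤ ∑ j, x j * y j / μ j := by
    have h1 : ∑ j, ((y j - x j) * x j / μ j)
        = ∑ j, x j * y j / μ j - ∑ j, x j ^ 2 / μ j := by
      rw [← Finset.sum_sub_distrib]
      refine Finset.sum_congr rfl fun j _ => ?_
      have h2 := hμ' j
      field_simp
    linarith
  have hhalf : ∀ (f : Fin m → ℝ), ∑ j, f j ^ 2 / μ j = 2 * ∑ j, f j ^ 2 / (2 * μ j) := by
    intro f
    rw [Finset.mul_sum]
    refine Finset.sum_congr rfl fun j _ => ?_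
    have h1 := hμ' j
    field_simp
  have hx2y2 : ∑ j, x j ^ 2 / (2 * μ j) ≤ ∑ j, y j ^ 2 / (2 * μ j) := by
    have hs := Finset.sum_le_sum (fun j (_ : j ∈ univ) => hxy j)
    rw [Finset.sum_add_distrib] at hs
    have e1 := hhalf x
    linarith
  -- Step 3: SC(a') ≤ ∑ x^2/μ
  have h3 : ∑ i, staticCost0 lam μ a' i ≤ ∑ j, x j ^ 2 / μ j := by
    unfold staticCost0
    rw [Finset.sum_comm]
    refine Finset.sum_le_sum fun j _ => ?_
    have e : ∀ i : Fin n, lam i * a' i j * (lam i * a' i j / (2 * μ j)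
          + (∑ k ∈ univ.erase i, lam k * a' k j) / μ j)
        = lam i * a' i j * x j / μ j - (lam i * a' i j) ^ 2 / (2 * μ j) := by
      intro i
      rw [← hx_eq i j]
      have h1 := hμ' j
      field_simp
      ring
    rw [Finset.sum_congr rfl fun i _ => e i, Finset.sum_sub_distrib, ← Finset.sum_div,
      ← Finset.sum_mul, hxj j]
    have hT : 0 ≤ ∑ i, (lam i * a' i j) ^ 2 / (2 * μ j) :=
      Finset.sum_nonneg fun i _ => div_nonneg (sq_nonneg _) (by have := hμ j; linarith)
    have hsq : x j * x j / μ j = x j ^ 2 / μ j := by rw [sq]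
    linarith
  -- Step 4: ∑ y^2/(2μ) ≤ SC(a*)
  have h4 : ∑ j, y j ^ 2 / (2 * μ j) ≤ ∑ i, staticCost0 lam μ astar i := by
    unfold staticCost0
    rw [Finset.sum_comm]
    refine Finset.sum_le_sum fun j _ => ?_
    have e : ∀ i : Fin n, lam i * astar i j * (lam i * astar i j / (2 * μ j)
          + (∑ k ∈ univ.erase i, lam k * astar k j) / μ j)
        = lam i * astar i j * y j / μ j - (lam i * astar i j) ^ 2 / (2 * μ j) := by
      intro i
      rw [← hy_eq i j]
      have h1 := hμ' j
      field_simp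
      ring
    rw [Finset.sum_congr rfl fun i _ => e i, Finset.sum_sub_distrib, ← Finset.sum_div,
      ← Finset.sum_mul, hyj j]
    have hS : ∑ i, (lam i * astar i j) ^ 2 ≤ y j ^ 2 := by
      have h1 : ∀ i : Fin n, (lam i * astar i j) ^ 2 ≤ (lam i * astar i j) * y j := by
        intro i
        have hle : lam i * astar i j ≤ y j := by
          rw [← hyj j]
          exact Finset.single_le_sum (f := fun k => lam k * astar k j)
            (fun k _ => mul_nonneg (hlam k).le (hastar k j)) (mem_univ i)
        have h0 : 0 ≤ lam i * astar i j := mul_nonneg (hlam i).le (hastar i j)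
        calc (lam i * astar i j) ^ 2 = (lam i * astar i j) * (lam i * astar i j) := sq _
          _ ≤ (lam i * astar i j) * y j := mul_le_mul_of_nonneg_left hle h0
      calc ∑ i, (lam i * astar i j) ^ 2
          ≤ ∑ i, (lam i * astar i j) * y j := Finset.sum_le_sum fun i _ => h1 i
        _ = y j ^ 2 := by rw [← Finset.sum_mul, hyj j, sq]
    have h2μ : (0:ℝ) ≤ 2 * μ j := by have := hμ j; linarith
    have hdiv : (∑ i, (lam i * astar i j) ^ 2) / (2 * μ j) ≤ y j ^ 2 / (2 * μ j) :=
      div_le_div_of_nonneg_right hS h2μ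
    rw [← Finset.sum_div]
    have hy2 : y j * y j / μ j - y j ^ 2 / (2 * μ j) = y j ^ 2 / (2 * μ j) := by
      have h1 := hμ' j
      field_simp
      ring
    linarith
  -- Conclusion
  have hB2 : 0 ≤ ∑ j, y j ^ 2 / (2 * μ j) :=
    Finset.sum_nonneg fun j _ => div_nonneg (sq_nonneg _) (by have := hμ j; linarith)
  have e1 := hhalf x
  have e2 := hhalf y
  linarith
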